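/- If n is even, then the Boolean nearest neighbor complexity of the n-variable majority function satisfies BNN(MAJₙ) ≤ n/2 + 2. -/

import Mathlib

open Finset

noncomputable section

noncomputable instance {n : ℕ} : DecidableEq (EuclideanSpace ℝ (Fin n)) :=
  fun _ _ => Classical.propDecidable _

/-- The embedding of a Boolean value into `ℝ`. -/
def boolToR (b : Bool) : ℝ := if b then 1 else 0

/-- The embedding of a Boolean vector into Euclidean space `ℝ^n`. -/
def toPoint {n : ℕ} (a : Fin n → Bool) : EuclideanSpace ℝ (Fin n) :=
  WithLp.toLp 2 (fun i => boolToR (a i))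

/-- `(P, N)` is a nearest neighbor representation of the Boolean function `f`:
`P` and `N` are disjoint finite sets of points of `ℝ^n` such that for every Boolean
vector `a`, if `f a = 1` then some `b ∈ P` is strictly closer to `a` than every `c ∈ N`,
and if `f a = 0` then some `b ∈ N` is strictly closer to `a` than every `c ∈ P`. -/
def IsNNRep {n : ℕ} (f : (Fin n → Bool) → Bool)
    (P N : Finset (EuclideanSpace ℝ (Fin n))) : Prop :=
  Disjoint P N ∧
  ∀ a : Fin n → Bool,
    (f a = true → ∃ b ∈ P, ∀ c ∈ N, dist (toPoint a) b < dist (toPoint a) c) ∧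
    (f a = false → ∃ b ∈ N, ∀ c ∈ P, dist (toPoint a) b < dist (toPoint a) c)

/-- The nearest neighbor complexity of `f`: the minimum size `|P ∪ N|` of a nearest
neighbor representation `(P, N)` of `f`. -/
def NN {n : ℕ} (f : (Fin n → Bool) → Bool) : ℕ :=
  sInf {m | ∃ P N, IsNNRep f P N ∧ (P ∪ N).card = m}

/-- A point of `ℝ^n` is Boolean if all of its coordinates are `0` or `1`. -/
def IsBooleanPoint {n : ℕ} (p : EuclideanSpace ℝ (Fin n)) : Prop :=
  ∀ i, p i = 0 ∨ p i = 1

/-- The Boolean nearest neighbor complexity of `f`: the minimum size `|P ∪ N|` of a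
nearest neighbor representation of `f` all of whose prototypes are Boolean points. -/
def BNN {n : ℕ} (f : (Fin n → Bool) → Bool) : ℕ :=
  sInf {m | ∃ P N, IsNNRep f P N ∧ (∀ p ∈ P ∪ N, IsBooleanPoint p) ∧ (P ∪ N).card = m}

/-- The weight (number of `1` components) of a Boolean vector. -/
def wt {n : ℕ} (x : Fin n → Bool) : ℕ := (Finset.univ.filter fun i => x i = true).card

/-- The majority function `MAJ_n`, with value `1` iff `x₁ + ⋯ + xₙ ≥ n / 2`. -/
def MAJ (n : ℕ) (x : Fin n → Bool) : Bool := decide (n ≤ 2 * wt x)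

/-!
Between Boolean points the squared Euclidean distance is the Hamming distance. Take the origin
as the only negative prototype, and as positive prototypes the vectors with a single `0`, at
`n / 2 + 1` chosen positions `i`. A vector `a` of weight `w` is at squared distance `w` from the
origin and `n - 1 - w + 2 aᵢ` from the `i`-th positive prototype. For even `n`, `w < n / 2`
makes the origin strictly nearest; `w > n / 2` makes every positive prototype strictly nearer;
and for `w = n / 2` some chosen position has `aᵢ = 0` by pigeonhole, whose prototype is nearer.
-/

section

variable {n : ℕ}

theorem dist_toPoint (a b : Fin n → Bool) :
    dist (toPoint a) (toPoint b) = √(hammingDist a b) := by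
  rw [EuclideanSpace.dist_eq, hammingDist, card_filter]
  push_cast
  congr 1
  refine sum_congr rfl fun j _ => ?_
  change dist (boolToR (a j)) (boolToR (b j)) ^ 2 = _
  cases a j <;> cases b j <;> simp [boolToR]

theorem dist_toPoint_lt_dist_toPoint_iff {a b c : Fin n → Bool} :
    dist (toPoint a) (toPoint b) < dist (toPoint a) (toPoint c) ↔
      hammingDist a b < hammingDist a c := by
  rw [dist_toPoint, dist_toPoint, Real.sqrt_lt_sqrt_iff (Nat.cast_nonneg _), Nat.cast_lt]

theorem toPoint_injective : Function.Injective (toPoint (n := n)) := fun a b h => by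
  rwa [← dist_eq_zero, dist_toPoint, Real.sqrt_eq_zero (Nat.cast_nonneg _), Nat.cast_eq_zero,
    hammingDist_eq_zero] at h

theorem isBooleanPoint_toPoint (a : Fin n → Bool) : IsBooleanPoint (toPoint a) := fun i => by
  cases a i <;> simp [toPoint, boolToR]

theorem isNNRep_image_toPoint {f : (Fin n → Bool) → Bool} {P N : Finset (Fin n → Bool)}
    (hPN : Disjoint P N)
    (hpos : ∀ a, f a = true → ∃ b ∈ P, ∀ c ∈ N, hammingDist a b < hammingDist a c)
    (hneg : ∀ a, f a = false → ∃ b ∈ N, ∀ c ∈ P, hammingDist a b < hammingDist a c) :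
    IsNNRep f (P.image toPoint) (N.image toPoint) := by
  refine ⟨(disjoint_image toPoint_injective).2 hPN, fun a => ⟨fun ha => ?_, fun ha => ?_⟩⟩
  · obtain ⟨b, hb, hbc⟩ := hpos a ha
    exact ⟨toPoint b, mem_image_of_mem _ hb, by
      simpa [dist_toPoint_lt_dist_toPoint_iff] using hbc⟩
  · obtain ⟨b, hb, hbc⟩ := hneg a ha
    exact ⟨toPoint b, mem_image_of_mem _ hb, by
      simpa [dist_toPoint_lt_dist_toPoint_iff] using hbc⟩

theorem BNN_le_card_add_card {f : (Fin n → Bool) → Bool} {P N : Finset (Fin n → Bool)}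
    (h : IsNNRep f (P.image toPoint) (N.image toPoint)) : BNN f ≤ #P + #N := by
  have hbool : ∀ p ∈ P.image toPoint ∪ N.image toPoint, IsBooleanPoint p := by
    simp only [mem_union, mem_image]
    rintro p (⟨a, -, rfl⟩ | ⟨a, -, rfl⟩) <;> exact isBooleanPoint_toPoint a
  calc BNN f ≤ #(P.image toPoint ∪ N.image toPoint) := Nat.sInf_le ⟨_, _, h, hbool, rfl⟩
    _ ≤ #P + #N := (card_union_le _ _).trans (add_le_add card_image_le card_image_le)

theorem hammingDist_false_right (a : Fin n → Bool) : hammingDist a (fun _ => false) = wt a := by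
  simp [hammingDist, wt]

def allButOne (i : Fin n) : Fin n → Bool := fun j => decide (j ≠ i)

theorem hammingDist_allButOne_add_wt (a : Fin n → Bool) (i : Fin n) :
    hammingDist a (allButOne i) + wt a + 1 = n + 2 * (a i).toNat := by
  -- both sides are `1` at every `j ≠ i`
  have key : ∀ j, ((if a j ≠ allButOne i j then 1 else 0) + (if a j = true then 1 else 0) +
      if i = j then 1 else 0) = 1 + if i = j then 2 * (a i).toNat else 0 := fun j => by
    by_cases hij : i = j
    · subst hij; cases a i <;> simp [allButOne]
    · cases a j <;> simp [allButOne, hij, Ne.symm hij]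
  have := sum_congr rfl fun j (_ : j ∈ univ) => key j
  simp only [sum_add_distrib, sum_ite_eq, mem_univ, if_true, sum_const, card_univ,
    Fintype.card_fin, smul_eq_mul, mul_one] at this
  rw [hammingDist, wt, card_filter, card_filter]
  omega

theorem exists_mem_eq_false_of_wt_lt_card {a : Fin n → Bool} {S : Finset (Fin n)}
    (h : wt a < #S) : ∃ i ∈ S, a i = false := by
  by_contra! hS
  exact h.not_ge (card_le_card fun i hi => by simpa using hS i hi)

theorem exists_hammingDist_allButOne_lt_wt (hn : Even n) {S : Finset (Fin n)} (hS : n / 2 < #S)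
    {a : Fin n → Bool} (ha : MAJ n a = true) : ∃ i ∈ S, hammingDist a (allButOne i) < wt a := by
  obtain ⟨k, rfl⟩ := hn
  simp only [MAJ, decide_eq_true_eq] at ha
  by_cases hwt : wt a = k
  · obtain ⟨i, hi, hai⟩ := exists_mem_eq_false_of_wt_lt_card (S := S) (a := a) (by omega)
    have := hammingDist_allButOne_add_wt a i
    rw [hai, Bool.toNat_false] at this
    exact ⟨i, hi, by omega⟩
  · obtain ⟨i, hi⟩ : S.Nonempty := card_pos.1 (by omega)
    have := hammingDist_allButOne_add_wt a i
    have := Bool.toNat_le (a i)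
    exact ⟨i, hi, by omega⟩

theorem wt_lt_hammingDist_allButOne (hn : Even n) {a : Fin n → Bool} (ha : MAJ n a = false)
    (i : Fin n) : wt a < hammingDist a (allButOne i) := by
  obtain ⟨k, rfl⟩ := hn
  simp only [MAJ, decide_eq_false_iff_not, not_le] at ha
  have := hammingDist_allButOne_add_wt a i
  omega

theorem isNNRep_MAJ (hn : Even n) {S : Finset (Fin n)} (hS : n / 2 < #S) :
    IsNNRep (MAJ n) ((S.image allButOne).image toPoint)
      (({fun _ => false} : Finset (Fin n → Bool)).image toPoint) := by
  refine isNNRep_image_toPoint ?_ (fun a ha => ?_) (fun a ha => ?_)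
  · simp only [disjoint_singleton_right, mem_image, not_exists, not_and]
    intro i _ hi
    have := hammingDist_allButOne_add_wt (fun _ => false) i
    rw [hi, hammingDist_self] at this
    simp only [wt, Bool.false_eq_true, filter_false, card_empty, Bool.toNat_false] at this
    obtain rfl : n = 1 := by omega
    exact Nat.not_even_one hn
  · obtain ⟨i, hi, hlt⟩ := exists_hammingDist_allButOne_lt_wt hn hS ha
    refine ⟨allButOne i, mem_image_of_mem _ hi, ?_⟩
    simpa [hammingDist_false_right] using hlt
  · refine ⟨fun _ => false, mem_singleton_self _, ?_⟩
    simpa [hammingDist_false_right] using fun i _ => wt_lt_hammingDist_allButOne hn ha i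

end

/-- If `n` is even, then the Boolean nearest neighbor complexity of the
`n`-variable majority function satisfies `BNN(MAJₙ) ≤ n / 2 + 2`. -/
theorem BNN_majority_even (n : ℕ) (hn : Even n) : BNN (MAJ n) ≤ n / 2 + 2 := by
  rcases Nat.eq_zero_or_pos n with rfl | hpos
  · have hrep : IsNNRep (MAJ 0) (({fun _ => false} : Finset _).image toPoint)
        ((∅ : Finset (Fin 0 → Bool)).image toPoint) :=
      isNNRep_image_toPoint (disjoint_empty_right _)
        (fun _ _ => ⟨_, mem_singleton_self _, by simp⟩) (fun _ ha => by simp [MAJ] at ha)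
    exact (BNN_le_card_add_card hrep).trans (by simp)
  · obtain ⟨S, -, hS⟩ := exists_subset_card_eq (s := (univ : Finset (Fin n))) (n := n / 2 + 1)
      (by rw [card_univ, Fintype.card_fin]; omega)
    calc BNN (MAJ n) ≤ #(S.image allButOne) + #{fun _ => false} :=
          BNN_le_card_add_card (isNNRep_MAJ hn (by omega))
      _ ≤ n / 2 + 2 := by grw [card_image_le, hS, card_singleton]
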